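/- arXiv:2408.10847 — 2 statements merged into one kernel-verified Lean document; each statement's English description precedes it below -/
import Mathlib

section
/- For every rational number $q = c/d$ with positive integers $c, d$ and $d \ge 2$, there exists a finite simple non-complete graph $G$ with $I(G) = q$, namely $G = K_c \vee (d K_1)$. -/
open SimpleGraph

noncomputable def isoCount {V : Type*} (G : SimpleGraph V) (S : Set V) : ℕ :=
  {v | v ∉ S ∧ ∀ w, G.Adj v w → w ∈ S}.ncard

noncomputable def isoTough {V : Type*} [Fintype V] (G : SimpleGraph V) : ℝ :=
  sInf {x : ℝ | ∃ S : Set V, 2 ≤ isoCount G S ∧ x = (S.ncard : ℝ) / (isoCount G S : ℝ)}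

noncomputable def isoToughVar {V : Type*} [Fintype V] (G : SimpleGraph V) : ℝ :=
  sInf {x : ℝ | ∃ S : Set V, 2 ≤ isoCount G S ∧ x = (S.ncard : ℝ) / ((isoCount G S : ℝ) - 1)}

/-- The join `K_c ∨ (d K_1)`. -/
def joinKE (c d : ℕ) : SimpleGraph (Fin c ⊕ Fin d) where
  Adj x y := x ≠ y ∧ (x.isLeft ∨ y.isLeft)
  symm := ⟨by intro x y h; tauto⟩
  loopless := ⟨by intro x h; exact h.1 rfl⟩

/-- The star `K_{1,n-1}`: join of one center with `n-1` leaves. -/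
def starGraph (n : ℕ) : SimpleGraph (Fin 1 ⊕ Fin (n-1)) := joinKE 1 (n-1)

/-- The graph `G_l = K_{l-1} ∨ (l K_k)`. -/
def Gl (k l : ℕ) : SimpleGraph (Fin (l-1) ⊕ Fin l × Fin k) where
  Adj x y := x ≠ y ∧ (x.isLeft ∨ y.isLeft ∨
    ∃ i p q, x = Sum.inr (i, p) ∧ y = Sum.inr (i, q))
  symm := by
    constructor
    rintro x y ⟨h1, h2⟩
    refine ⟨h1.symm, ?_⟩
    rcases h2 with h | h | ⟨i, p, q, hx, hy⟩
    · tauto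
    · tauto
    · exact Or.inr (Or.inr ⟨i, q, p, hy, hx⟩)
  loopless := ⟨fun x h => h.1 rfl⟩

noncomputable instance GlDec (k l : ℕ) : DecidableRel (Gl k l).Adj := Classical.decRel _

lemma joinKE_adj (c d : ℕ) (x y : Fin c ⊕ Fin d) :
    (joinKE c d).Adj x y ↔ x ≠ y ∧ (x.isLeft ∨ y.isLeft) := Iff.rfl

lemma ncard_range_inl (c d : ℕ) :
    (Set.range (Sum.inl : Fin c → Fin c ⊕ Fin d)).ncard = c := by
  rw [← Nat.card_coe_set_eq, Nat.card_range_of_injective Sum.inl_injective,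
    Nat.card_eq_fintype_card, Fintype.card_fin]

lemma ncard_range_inr (c d : ℕ) :
    (Set.range (Sum.inr : Fin d → Fin c ⊕ Fin d)).ncard = d := by
  rw [← Nat.card_coe_set_eq, Nat.card_range_of_injective Sum.inr_injective,
    Nat.card_eq_fintype_card, Fintype.card_fin]

theorem isoTough_surjective_on_rationals (c d : ℕ) (hc : 1 ≤ c) (hd : 2 ≤ d) :
    ∃ (V : Type) (_ : Fintype V) (G : SimpleGraph V),
      G ≠ ⊤ ∧ isoTough G = (c : ℝ) / (d : ℝ) := by
  refine ⟨Fin c ⊕ Fin d, inferInstance, joinKE c d, ?_, ?_⟩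
  · intro h
    have hadj : (joinKE c d).Adj (Sum.inr ⟨0, by omega⟩) (Sum.inr ⟨1, by omega⟩) := by
      rw [h, top_adj]
      simp [Fin.ext_iff]
    rw [joinKE_adj] at hadj
    simp at hadj
  · have hd0 : (0:ℝ) < d := by positivity
    have key : IsLeast {x : ℝ | ∃ S : Set (Fin c ⊕ Fin d),
        2 ≤ isoCount (joinKE c d) S ∧
        x = (S.ncard : ℝ) / (isoCount (joinKE c d) S : ℝ)} ((c:ℝ)/d) := by
      constructor
      · refine ⟨Set.range Sum.inl, ?_⟩
        have hiso : {v | v ∉ Set.range (Sum.inl : Fin c → Fin c ⊕ Fin d) ∧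
            ∀ w, (joinKE c d).Adj v w → w ∈ Set.range Sum.inl} =
            Set.range (Sum.inr : Fin d → Fin c ⊕ Fin d) := by
          ext v
          rcases v with i | j
          · simp [Set.mem_setOf_eq]
          · simp only [Set.mem_setOf_eq, Set.mem_range]
            constructor
            · intro _; exact ⟨j, rfl⟩
            · rintro _
              refine ⟨by simp, ?_⟩
              intro w hw
              rw [joinKE_adj] at hw
              rcases w with i | j'
              · exact ⟨i, rfl⟩
              · simp at hw
        have hcount : isoCount (joinKE c d) (Set.range Sum.inl) = d := by
          rw [isoCount, hiso, ncard_range_inr]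
        rw [hcount, ncard_range_inl]
        exact ⟨by omega, rfl⟩
      · rintro x ⟨S, hS, rfl⟩
        -- all left vertices are in S
        have hleft : Set.range (Sum.inl : Fin c → Fin c ⊕ Fin d) ⊆ S := by
          rintro _ ⟨i, rfl⟩
          by_contra hi
          have hsub : {v | v ∉ S ∧ ∀ w, (joinKE c d).Adj v w → w ∈ S} ⊆
              {(Sum.inl i : Fin c ⊕ Fin d)} := by
            rintro v ⟨hvS, hv⟩
            by_contra hne
            simp only [Set.mem_singleton_iff] at hne
            have : (joinKE c d).Adj v (Sum.inl i) := by
              rw [joinKE_adj]; exact ⟨hne, Or.inr rfl⟩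
            exact hi (hv _ this)
          have : isoCount (joinKE c d) S ≤ 1 := by
            have h1 := Set.ncard_le_ncard hsub (Set.finite_singleton _)
            rw [Set.ncard_singleton] at h1
            exact h1
          omega
        -- the isolated set equals range inr \ S
        have hiso : {v | v ∉ S ∧ ∀ w, (joinKE c d).Adj v w → w ∈ S} =
            Set.range (Sum.inr : Fin d → Fin c ⊕ Fin d) \ S := by
          ext v
          rcases v with i | j
          · simp only [Set.mem_setOf_eq, Set.mem_diff, Set.mem_range]
            constructor
            · rintro ⟨hvS, -⟩; exact absurd (hleft ⟨i, rfl⟩) hvS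
            · rintro ⟨⟨j, h⟩, -⟩; exact absurd h (by simp)
          · simp only [Set.mem_setOf_eq, Set.mem_diff, Set.mem_range]
            constructor
            · rintro ⟨hvS, -⟩; exact ⟨⟨j, rfl⟩, hvS⟩
            · rintro ⟨-, hvS⟩
              refine ⟨hvS, ?_⟩
              intro w hw
              rw [joinKE_adj] at hw
              rcases w with i | j'
              · exact hleft ⟨i, rfl⟩
              · simp at hw
        set t := (S ∩ Set.range (Sum.inr : Fin d → Fin c ⊕ Fin d)).ncard with ht
        have hScard : S.ncard = c + t := by
          have hSeq : S = Set.range (Sum.inl : Fin c → Fin c ⊕ Fin d) ∪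
              (S ∩ Set.range Sum.inr) := by
            ext v
            rcases v with i | j
            · simp only [Set.mem_union, Set.mem_inter_iff, Set.mem_range]
              constructor
              · intro _; exact Or.inl ⟨i, rfl⟩
              · rintro (⟨i', h⟩ | ⟨h, -⟩)
                · exact hleft ⟨i, rfl⟩
                · exact h
            · simp only [Set.mem_union, Set.mem_inter_iff, Set.mem_range]
              constructor
              · intro h; exact Or.inr ⟨h, ⟨j, rfl⟩⟩
              · rintro (⟨i', h⟩ | ⟨h, -⟩)
                · exact absurd h (by simp)
                · exact h
          rw [hSeq, Set.ncard_union_eq ?_ (Set.toFinite _) (Set.toFinite _),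
            ncard_range_inl]
          rw [Set.disjoint_left]
          rintro _ ⟨i, rfl⟩ ⟨-, j, h⟩
          exact absurd h (by simp)
        have hIcard : isoCount (joinKE c d) S + t = d := by
          have hReq : Set.range (Sum.inr : Fin d → Fin c ⊕ Fin d) =
              (Set.range Sum.inr \ S) ∪ (S ∩ Set.range Sum.inr) := by
            ext v
            simp only [Set.mem_union, Set.mem_diff, Set.mem_inter_iff]
            tauto
          have := congrArg Set.ncard hReq
          rw [ncard_range_inr, Set.ncard_union_eq ?_ (Set.toFinite _) (Set.toFinite _)]
            at this
          · rw [isoCount, hiso]; omega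
          · rw [Set.disjoint_left]
            rintro v ⟨-, hvS⟩ ⟨h, -⟩
            exact hvS h
        set m := isoCount (joinKE c d) S with hm
        have hm0 : (0:ℝ) < m := by
          have : 0 < m := by omega
          exact_mod_cast this
        rw [div_le_div_iff₀ hd0 hm0, hScard]
        have hnat : c * m ≤ (c + t) * d := by nlinarith [hIcard, hS]
        exact_mod_cast hnat
    rw [isoTough]
    exact key.csInf_eq
end

section
/- For every rational number $q = c/d$ with positive integers $c, d$, there exists a finite simple non-complete graph $G$ with $I'(G) = q$, namely $G = K_c \vee ((d+1) K_1)$. -/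
open SimpleGraph

/-!
In `K_c ∨ ((d+1) K_1)` every vertex of `K_c` is adjacent to all others, so any `S` leaving at
least two isolated vertices contains `K_c`. If `S` also contains `t` of the outer vertices, the
ratio is `(c + t) / (d - t) ≥ c / d`, with equality for `S = K_c`.
-/

open Set

theorem Set.ncard_eq_ncard_preimage_inl_add_ncard_preimage_inr {α β : Type*} [Finite α]
    [Finite β] (s : Set (α ⊕ β)) :
    s.ncard = (Sum.inl ⁻¹' s).ncard + (Sum.inr ⁻¹' s).ncard := by
  conv_lhs => rw [← image_preimage_inl_union_image_preimage_inr s]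
  rw [ncard_union_eq disjoint_image_inl_image_inr,
    ncard_image_of_injective _ Sum.inl_injective, ncard_image_of_injective _ Sum.inr_injective]

theorem div_le_add_div_sub {c m t : ℝ} (hc : 0 ≤ c) (ht : 0 ≤ t) (htm : t < m) :
    c / m ≤ (c + t) / (m - t) :=
  calc c / m ≤ c / (m - t) := by gcongr; linarith
    _ ≤ (c + t) / (m - t) := by gcongr; linarith

lemma mem_of_two_le_isoCount {V : Type*} {G : SimpleGraph V} {S : Set V} {u : V}
    (hu : ∀ v, v ≠ u → G.Adj v u) (hS : 2 ≤ isoCount G S) : u ∈ S := by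
  by_contra huS
  have hsub : {v | v ∉ S ∧ ∀ w, G.Adj v w → w ∈ S} ⊆ {u} := by
    rintro v ⟨-, hv⟩
    by_contra hvu
    exact huS (hv u (hu v hvu))
  have := ncard_le_ncard hsub
  rw [ncard_singleton] at this
  unfold isoCount at hS
  omega

section joinKE

variable {c n : ℕ}

lemma joinKE_adj_inl (a : Fin c) (v : Fin c ⊕ Fin n) (hv : v ≠ Sum.inl a) :
    (joinKE c n).Adj v (Sum.inl a) :=
  ⟨hv, Or.inr rfl⟩

lemma joinKE_ne_top (hn : 2 ≤ n) : joinKE c n ≠ ⊤ := by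
  intro h
  have hadj : (joinKE c n).Adj (Sum.inr ⟨0, by omega⟩) (Sum.inr ⟨1, by omega⟩) := by
    rw [h]
    simp
  simp [joinKE] at hadj

lemma isoCount_joinKE_add_ncard_preimage_inr {S : Set (Fin c ⊕ Fin n)}
    (hS : ∀ a, Sum.inl a ∈ S) :
    isoCount (joinKE c n) S + (Sum.inr ⁻¹' S).ncard = n := by
  have hiso : {v | v ∉ S ∧ ∀ w, (joinKE c n).Adj v w → w ∈ S} = Sum.inr '' (Sum.inr ⁻¹' S)ᶜ := by
    ext (a | j)
    · simp [hS a]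
    · simp only [mem_ofPred_eq, Sum.inr_injective.mem_set_image, mem_compl_iff, mem_preimage,
        and_iff_left_iff_imp]
      rintro - (a | j') hw
      · exact hS a
      · simp [joinKE] at hw
  rw [isoCount, hiso, ncard_image_of_injective _ Sum.inr_injective, add_comm,
    ncard_add_ncard_compl, Nat.card_eq_fintype_card, Fintype.card_fin]

lemma ncard_eq_add_ncard_preimage_inr {S : Set (Fin c ⊕ Fin n)} (hS : ∀ a, Sum.inl a ∈ S) :
    S.ncard = c + (Sum.inr ⁻¹' S).ncard := by
  rw [ncard_eq_ncard_preimage_inl_add_ncard_preimage_inr,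
    show Sum.inl ⁻¹' S = univ from eq_univ_of_forall hS,
    ncard_univ, Nat.card_eq_fintype_card, Fintype.card_fin]

end joinKE

theorem isoToughVar_joinKE (c : ℕ) {d : ℕ} (hd : 1 ≤ d) :
    isoToughVar (joinKE c (d + 1)) = c / d := by
  refine IsLeast.csInf_eq ⟨⟨range Sum.inl, ?_⟩, ?_⟩
  · have hL : ∀ a : Fin c, Sum.inl a ∈ range (Sum.inl : Fin c → Fin c ⊕ Fin (d + 1)) :=
      fun a => ⟨a, rfl⟩
    have hiso := isoCount_joinKE_add_ncard_preimage_inr hL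
    have hcard := ncard_eq_add_ncard_preimage_inr hL
    have hempty : Sum.inr ⁻¹' range (Sum.inl : Fin c → Fin c ⊕ Fin (d + 1)) = ∅ := by
      ext; simp
    rw [hempty, ncard_empty, add_zero] at hiso hcard
    refine ⟨by omega, ?_⟩
    rw [hiso, hcard, Nat.cast_add, Nat.cast_one, add_sub_cancel_right]
  · rintro _ ⟨S, hS, rfl⟩
    have hL : ∀ a, Sum.inl a ∈ S := fun a => mem_of_two_le_isoCount (joinKE_adj_inl a) hS
    have hiso : (isoCount (joinKE c (d + 1)) S : ℝ) + (Sum.inr ⁻¹' S).ncard = d + 1 := by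
      exact_mod_cast isoCount_joinKE_add_ncard_preimage_inr hL
    have hS' : (2 : ℝ) ≤ isoCount (joinKE c (d + 1)) S := by exact_mod_cast hS
    rw [ncard_eq_add_ncard_preimage_inr hL, Nat.cast_add,
      show (isoCount (joinKE c (d + 1)) S : ℝ) - 1 = d - (Sum.inr ⁻¹' S).ncard by linarith]
    exact div_le_add_div_sub (Nat.cast_nonneg _) (Nat.cast_nonneg _) (by linarith)

theorem isoToughVar_surjective_on_rationals_general (c d : ℕ) (hd : 1 ≤ d) :
    ∃ (V : Type) (_ : Fintype V) (G : SimpleGraph V),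
      G ≠ ⊤ ∧ isoToughVar G = (c : ℝ) / (d : ℝ) :=
  ⟨_, inferInstance, joinKE c (d + 1), joinKE_ne_top (by omega), isoToughVar_joinKE c hd⟩

theorem isoToughVar_surjective_on_rationals (c d : ℕ) (hc : 1 ≤ c) (hd : 1 ≤ d) :
    ∃ (V : Type) (_ : Fintype V) (G : SimpleGraph V),
      G ≠ ⊤ ∧ isoToughVar G = (c : ℝ) / (d : ℝ) :=
  isoToughVar_surjective_on_rationals_general c d hd
end
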